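/- Let f : [0,1] → ℝ be twice differentiable, antisymmetric about c ∈ (0,1), with f''>0 on (0,c), and define g(x) = f(x) + f'(x)(r - x) - f(r) for fixed r ∈ [0,c). Then g(c) < 0 and g(2c - r) > 0 (assuming 2c - r ≤ 1); hence by the intermediate value theorem there exists d_r ∈ (c, 2c - r) with g(d_r) = 0. -/
import Mathlib


open Set

theorem stmt_6 (f : ℝ → ℝ) (c : ℝ) (hc : c ∈ Ioo (0:ℝ) 1)
    (hf1 : Differentiable ℝ f) (hf2 : Differentiable ℝ (deriv f))
    (hanti : ∀ x ∈ Icc (0:ℝ) 1, 2*c - x ∈ Icc (0:ℝ) 1 →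
      f x - f c = f c - f (2*c - x))
    (hconv : ∀ x ∈ Ioo (0:ℝ) c, 0 < deriv (deriv f) x)
    (r : ℝ) (hr : r ∈ Ico (0:ℝ) c) (hr1 : 2*c - r ≤ 1)
    (g : ℝ → ℝ) (hg : g = fun x => f x + deriv f x * (r - x) - f r) :
    g c < 0 ∧ 0 < g (2*c - r) ∧ ∃ d ∈ Ioo c (2*c - r), g d = 0 := by
  obtain ⟨hc0, hc1⟩ := hc
  obtain ⟨hr0, hrc⟩ := hr
  have hccr : c < 2*c - r := by linarith
  -- strict monotonicity of deriv f on [0, c]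
  have hmono : StrictMonoOn (deriv f) (Icc 0 c) := by
    apply strictMonoOn_of_deriv_pos (convex_Icc 0 c) hf2.continuous.continuousOn
    rw [interior_Icc]
    exact fun x hx => hconv x hx
  -- MVT slope point
  obtain ⟨ξ, hξ, hslope⟩ := exists_deriv_eq_slope f hrc hf1.continuous.continuousOn
    (hf1.differentiableOn)
  have hfceq : f c - f r = deriv f ξ * (c - r) := by
    rw [hslope, div_mul_cancel₀]
    exact ne_of_gt (by linarith)
  have hξr : deriv f r < deriv f ξ :=
    hmono ⟨hr0, hrc.le⟩ ⟨by linarith [hξ.1], hξ.2.le⟩ hξ.1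
  have hξc : deriv f ξ < deriv f c :=
    hmono ⟨by linarith [hξ.1], hξ.2.le⟩ ⟨hc0.le, le_refl c⟩ hξ.2
  -- symmetry of deriv f
  have hsymI : ∀ x ∈ Ioo r (2*c - r), deriv f x = deriv f (2*c - x) := by
    intro x hx
    have hconst : Set.EqOn (fun y => f y + f (2*c - y)) (fun _ => 2 * f c)
        (Ioo r (2*c - r)) := by
      intro y hy
      have hy1 : y ∈ Icc (0:ℝ) 1 := ⟨by linarith [hy.1], by linarith [hy.2]⟩
      have hy2 : 2*c - y ∈ Icc (0:ℝ) 1 := ⟨by linarith [hy.2], by linarith [hy.1]⟩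
      have := hanti y hy1 hy2
      simp only
      linarith
    have hderiv : deriv (fun y => f y + f (2*c - y)) x = 0 := by
      have hEq : (fun y => f y + f (2*c - y)) =ᶠ[nhds x] (fun _ => 2 * f c) :=
        Filter.eventuallyEq_of_mem (isOpen_Ioo.mem_nhds hx) hconst
      rw [hEq.deriv_eq]
      simp
    have h1 : HasDerivAt (fun y => f y + f (2*c - y))
        (deriv f x + deriv f (2*c - x) * (-1)) x := by
      exact (hf1 x).hasDerivAt.add
        (((hf1 (2*c - x)).hasDerivAt).comp x (((hasDerivAt_id x).const_sub (2*c))))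
    rw [h1.deriv] at hderiv
    linarith
  have hsym : deriv f r = deriv f (2*c - r) := by
    have hcl : Set.EqOn (deriv f) (fun x => deriv f (2*c - x)) (closure (Ioo r (2*c - r))) :=
      Set.EqOn.closure hsymI hf2.continuous
        (hf2.continuous.comp (continuous_const.sub continuous_id))
    have : r ∈ closure (Ioo r (2*c - r)) := by
      rw [closure_Ioo (ne_of_lt (by linarith : r < 2*c - r))]
      exact ⟨le_refl r, by linarith⟩
    exact hcl this
  -- value symmetry at r
  have hvr : f (2*c - r) = 2 * f c - f r := by
    have h1 : r ∈ Icc (0:ℝ) 1 := ⟨hr0, by linarith⟩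
    have h2 : 2*c - r ∈ Icc (0:ℝ) 1 := ⟨by linarith, hr1⟩
    have := hanti r h1 h2
    linarith
  -- g c < 0
  have hgc : g c < 0 := by
    rw [hg]
    simp only
    nlinarith [hξc, hfceq, sub_pos.mpr hrc]
  -- g (2c - r) > 0
  have hgcr : 0 < g (2*c - r) := by
    rw [hg]
    simp only
    rw [← hsym, hvr]
    nlinarith [hξr, hfceq, sub_pos.mpr hrc]
  refine ⟨hgc, hgcr, ?_⟩
  have hcont : Continuous g := by
    rw [hg]
    exact (hf1.continuous.add (hf2.continuous.mul (continuous_const.sub continuous_id))).sub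
      continuous_const
  obtain ⟨d, hd, hgd⟩ := intermediate_value_Ioo hccr.le hcont.continuousOn ⟨hgc, hgcr⟩
  exact ⟨d, hd, hgd⟩
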